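/- arXiv:1909.04343 — 7 statements merged into one kernel-verified Lean document; each statement's English description precedes it below -/
import Mathlib

section
/- For any n ≥ 1 and any real numbers s, t, the set {(p + s·q)/2^n : p, q ∈ ℤ, 0 ≤ p, q ≤ 2^n − 1} is contained in the set {φ_α(0) : α ∈ {1,...,6}^n}, where the φ_i are the maps of the IFS Φ_{s,t}. -/
open scoped BigOperators

noncomputable def phiST (s t : ℝ) (i : Fin 6) (x : ℝ) : ℝ :=
  (x + ![0, 1, s, 1 + s, t, 1 + t] i) / 2

noncomputable def compST (s t : ℝ) (l : List (Fin 6)) : ℝ → ℝ :=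
  l.foldr (fun i g => phiST s t i ∘ g) id

noncomputable def DeltaST (s t : ℝ) (n : ℕ) : ℝ :=
  sInf {r : ℝ | ∃ a b : List (Fin 6), a.length = n ∧ b.length = n ∧ a ≠ b ∧
    r = |compST s t a 0 - compST s t b 0|}

/-!
Read `p` and `q` in binary. The first map of the word contributes the leading binary digits
`(a, b)` of `(p, q)` through the translation `a + s * b`, which is one of the six translations
of the IFS (the map `φ₅`/`φ₆` with `t` is never needed). Induction on `n` then peels off the
leading digits.
-/

lemma compST_cons (s t : ℝ) (i : Fin 6) (l : List (Fin 6)) (x : ℝ) :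
    compST s t (i :: l) x = phiST s t i (compST s t l x) :=
  rfl

lemma exists_phiST_eq_digits (s t : ℝ) {a b : ℕ} (ha : a < 2) (hb : b < 2) :
    ∃ i, ∀ x, phiST s t i x = (x + a + s * b) / 2 := by
  interval_cases a <;> interval_cases b
  · exact ⟨0, fun x => by simp [phiST]⟩
  · exact ⟨2, fun x => by simp [phiST]⟩
  · exact ⟨1, fun x => by simp [phiST]⟩
  · exact ⟨3, fun x => by simp [phiST, add_assoc]⟩

lemma exists_compST_eq_binary (s t : ℝ) (n : ℕ) {p q : ℕ} (hp : p < 2 ^ n) (hq : q < 2 ^ n) :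
    ∃ l : List (Fin 6), l.length = n ∧ compST s t l 0 = ((p : ℝ) + s * q) / 2 ^ n := by
  induction n generalizing p q with
  | zero =>
    obtain rfl : p = 0 := by simpa using hp
    obtain rfl : q = 0 := by simpa using hq
    exact ⟨[], rfl, by simp [compST]⟩
  | succ n ih =>
    have hpow : 0 < 2 ^ n := Nat.two_pow_pos n
    obtain ⟨l, hl, hval⟩ := ih (Nat.mod_lt p hpow) (Nat.mod_lt q hpow)
    obtain ⟨i, hi⟩ := exists_phiST_eq_digits s t
      (Nat.div_lt_of_lt_mul (pow_succ 2 n ▸ hp)) (Nat.div_lt_of_lt_mul (pow_succ 2 n ▸ hq))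
    refine ⟨i :: l, by simp [hl], ?_⟩
    have hp_split : (p : ℝ) = (p % 2 ^ n : ℕ) + 2 ^ n * (p / 2 ^ n : ℕ) := by
      exact_mod_cast (Nat.mod_add_div p (2 ^ n)).symm
    have hq_split : (q : ℝ) = (q % 2 ^ n : ℕ) + 2 ^ n * (q / 2 ^ n : ℕ) := by
      exact_mod_cast (Nat.mod_add_div q (2 ^ n)).symm
    rw [compST_cons, hi, hval, hp_split, hq_split]
    field_simp
    ring

theorem stmt1_general (n : ℕ) (s t : ℝ) :
    {x : ℝ | ∃ p q : ℤ, 0 ≤ p ∧ p ≤ 2 ^ n - 1 ∧ 0 ≤ q ∧ q ≤ 2 ^ n - 1 ∧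
      x = ((p : ℝ) + s * q) / 2 ^ n} ⊆
    {x : ℝ | ∃ l : List (Fin 6), l.length = n ∧ x = compST s t l 0} := by
  rintro x ⟨p, q, hp0, hp, hq0, hq, rfl⟩
  lift p to ℕ using hp0
  lift q to ℕ using hq0
  have hp' : p < 2 ^ n := by zify; omega
  have hq' : q < 2 ^ n := by zify; omega
  obtain ⟨l, hl, hval⟩ := exists_compST_eq_binary s t n hp' hq'
  exact ⟨l, hl, by simpa using hval.symm⟩

theorem stmt1 (n : ℕ) (hn : 1 ≤ n) (s t : ℝ) :
    {x : ℝ | ∃ p q : ℤ, 0 ≤ p ∧ p ≤ 2 ^ n - 1 ∧ 0 ≤ q ∧ q ≤ 2 ^ n - 1 ∧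
      x = ((p : ℝ) + s * q) / 2 ^ n} ⊆
    {x : ℝ | ∃ l : List (Fin 6), l.length = n ∧ x = compST s t l 0} :=
  stmt1_general n s t
end

section
/- Let s, t be irrational real numbers. If there exist n ≥ 1 and sequences (ω_{i,1}), (δ_{i,1}), (δ'_{i,1}), (ω_{i,2}), (δ_{i,2}), (δ'_{i,2}) ∈ {0,1}ⁿ, not all three pairs equal, such that Σ ω_{i,1}/2^i + s·Σ δ_{i,1}/2^i + t·Σ δ'_{i,1}/2^i = Σ ω_{i,2}/2^i + s·Σ δ_{i,2}/2^i + t·Σ δ'_{i,2}/2^i, then there exist integers a, b, c, d with a ≠ 0, b ≠ 0, d ≠ 0 such that t = (a/b)·s + c/d. -/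
open scoped BigOperators

/-!
Subtracting the two sides of the hypothesis gives a relation `A + B s + C t = 0` with rational
coefficients, and `(A, B, C) ≠ 0` because finite binary expansions with digits in `{0, 1}` are
unique. If `B = 0` then `C ≠ 0` and `t` would be rational; if `C = 0` then `s` would be rational.
Hence `t = (-B / C) s + (-A / C)` with `-B / C ≠ 0`.
-/

def binaryFrac {K : Type*} [DivisionRing K] {n : ℕ} (f : Fin n → ℕ) : K :=
  ∑ i, (f i : K) / 2 ^ (i.1 + 1)

@[simp, norm_cast]
theorem Rat.cast_binaryFrac {K : Type*} [DivisionRing K] [CharZero K] {n : ℕ} (f : Fin n → ℕ) :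
    ((binaryFrac f : ℚ) : K) = binaryFrac f := by
  simp [binaryFrac]

section LinearOrderedField

variable {K : Type*} [Field K] [LinearOrder K] [IsStrictOrderedRing K]

theorem binaryFrac_succ {n : ℕ} (f : Fin (n + 1) → ℕ) :
    (binaryFrac f : K) = (f 0 + binaryFrac (Fin.tail f)) / 2 := by
  simp only [binaryFrac, Fin.sum_univ_succ, Fin.val_zero, Fin.val_succ, Fin.tail, pow_succ,
    add_div, Finset.sum_div]
  congr 1
  · ring
  · exact Finset.sum_congr rfl fun i _ => by ring

theorem binaryFrac_nonneg {n : ℕ} (f : Fin n → ℕ) : 0 ≤ (binaryFrac f : K) :=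
  Finset.sum_nonneg fun _ _ => by positivity

theorem binaryFrac_lt_one {n : ℕ} {f : Fin n → ℕ} (hf : ∀ i, f i ≤ 1) :
    (binaryFrac f : K) < 1 := by
  induction n with
  | zero => simp [binaryFrac]
  | succ n ih =>
    have hhead : (f 0 : K) ≤ 1 := by exact_mod_cast hf 0
    have htail : (binaryFrac (Fin.tail f) : K) < 1 := ih fun i => hf i.succ
    rw [binaryFrac_succ]
    linarith

theorem Nat.eq_of_add_eq_add_of_lt_one {a b : ℕ} {x y : K} (hx : 0 ≤ x) (hy : 0 ≤ y)
    (hx₁ : x < 1) (hy₁ : y < 1) (h : a + x = b + y) : a = b := by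
  by_contra hab
  rcases Nat.lt_or_gt_of_ne hab with hlt | hlt
  · have : (a : K) + 1 ≤ b := by exact_mod_cast hlt
    linarith
  · have : (b : K) + 1 ≤ a := by exact_mod_cast hlt
    linarith

theorem binaryFrac_injective {n : ℕ} {f g : Fin n → ℕ} (hf : ∀ i, f i ≤ 1) (hg : ∀ i, g i ≤ 1)
    (h : (binaryFrac f : K) = binaryFrac g) : f = g := by
  induction n with
  | zero => exact Subsingleton.elim f g
  | succ n ih =>
    rw [binaryFrac_succ, binaryFrac_succ, div_left_inj' two_ne_zero] at h
    have hhead : f 0 = g 0 :=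
      Nat.eq_of_add_eq_add_of_lt_one (binaryFrac_nonneg _) (binaryFrac_nonneg _)
        (binaryFrac_lt_one fun i => hf i.succ) (binaryFrac_lt_one fun i => hg i.succ) h
    rw [hhead, add_right_inj] at h
    have htail : Fin.tail f = Fin.tail g := ih (fun i => hf i.succ) (fun i => hg i.succ) h
    rw [← Fin.cons_self_tail f, ← Fin.cons_self_tail g, hhead, htail]

end LinearOrderedField

theorem exists_int_eq_div_mul_add_div_of_rat_relation {s t : ℝ} (hs : Irrational s)
    (ht : Irrational t) {A B C : ℚ} (hABC : ¬(A = 0 ∧ B = 0 ∧ C = 0))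
    (h : (A : ℝ) + s * B + t * C = 0) :
    ∃ a b c d : ℤ, a ≠ 0 ∧ b ≠ 0 ∧ d ≠ 0 ∧ t = ((a : ℝ) / b) * s + (c : ℝ) / d := by
  have hB : B ≠ 0 := by
    rintro rfl
    have hC : C ≠ 0 := by
      rintro rfl
      exact hABC ⟨by exact_mod_cast (by simpa using h : (A : ℝ) = 0), rfl, rfl⟩
    refine ht.ne_rat (-A / C) ?_
    push_cast
    field_simp
    linear_combination h
  have hC : C ≠ 0 := by
    rintro rfl
    refine hs.ne_rat (-A / B) ?_
    push_cast
    field_simp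
    linear_combination h
  refine ⟨(-B / C).num, (-B / C).den, (-A / C).num, (-A / C).den,
    Rat.num_ne_zero.mpr (div_ne_zero (neg_ne_zero.mpr hB) hC),
    Int.natCast_ne_zero.mpr (-B / C).den_nz, Int.natCast_ne_zero.mpr (-A / C).den_nz, ?_⟩
  simp only [Int.cast_natCast, ← Rat.cast_def]
  push_cast
  field_simp
  linear_combination h

theorem stmt3 (s t : ℝ) (hs : Irrational s) (ht : Irrational t)
    (h : ∃ (n : ℕ), 1 ≤ n ∧ ∃ ω₁ δ₁ δ₁' ω₂ δ₂ δ₂' : Fin n → ℕ,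
      (∀ i, ω₁ i ≤ 1) ∧ (∀ i, δ₁ i ≤ 1) ∧ (∀ i, δ₁' i ≤ 1) ∧
      (∀ i, ω₂ i ≤ 1) ∧ (∀ i, δ₂ i ≤ 1) ∧ (∀ i, δ₂' i ≤ 1) ∧
      ¬(ω₁ = ω₂ ∧ δ₁ = δ₂ ∧ δ₁' = δ₂') ∧
      ∑ i, (ω₁ i : ℝ) / 2 ^ (i.1 + 1) + s * ∑ i, (δ₁ i : ℝ) / 2 ^ (i.1 + 1)
        + t * ∑ i, (δ₁' i : ℝ) / 2 ^ (i.1 + 1)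
      = ∑ i, (ω₂ i : ℝ) / 2 ^ (i.1 + 1) + s * ∑ i, (δ₂ i : ℝ) / 2 ^ (i.1 + 1)
        + t * ∑ i, (δ₂' i : ℝ) / 2 ^ (i.1 + 1)) :
    ∃ a b c d : ℤ, a ≠ 0 ∧ b ≠ 0 ∧ d ≠ 0 ∧ t = ((a : ℝ) / b) * s + (c : ℝ) / d := by
  obtain ⟨n, -, ω₁, δ₁, δ₁', ω₂, δ₂, δ₂', hω₁, hδ₁, hδ₁', hω₂, hδ₂, hδ₂', hne, heq⟩ := h
  refine exists_int_eq_div_mul_add_div_of_rat_relation hs ht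
    (A := binaryFrac ω₁ - binaryFrac ω₂) (B := binaryFrac δ₁ - binaryFrac δ₂)
    (C := binaryFrac δ₁' - binaryFrac δ₂') ?_ ?_
  · rintro ⟨hA, hB, hC⟩
    exact hne ⟨binaryFrac_injective (K := ℚ) hω₁ hω₂ (sub_eq_zero.mp hA),
      binaryFrac_injective (K := ℚ) hδ₁ hδ₂ (sub_eq_zero.mp hB),
      binaryFrac_injective (K := ℚ) hδ₁' hδ₂' (sub_eq_zero.mp hC)⟩
  · push_cast
    simp only [binaryFrac]
    linear_combination heq
end

section
/- Let t be irrational in (0,1) with continued fraction denominators q'ₘ, and for each m ≥ 2 let Mₘ ∈ ℕ satisfy 2^{Mₘ−1} − 1 ≤ q'ₘ < 2^{Mₘ} − 1. Then for every m ≥ 2 and every pair (p,q) ∈ ℤ × ℕ with 1 ≤ q < q'ₘ, one has |t − p/q| > 1/2^{2Mₘ+1}. -/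
/-!
Suppose `|t - p/q| ≤ 2^-(2M+1)`. Since `q < 2^M`, Legendre's theorem makes `p/q` a convergent
`pₙ/qₙ` with `qₙ ≤ q < q'ₘ`, so `n < m` and both `qₙ` and `qₙ₊₁` are below `2^M`. But consecutive
convergents differ by exactly `1/(qₙqₙ₊₁)` (determinant formula) while `pₙ₊₁/qₙ₊₁` is within
`1/(qₙ₊₁qₙ₊₂) ≤ 1/(2qₙqₙ₊₁)` of `t`, so `|t - pₙ/qₙ| ≥ 1/(2qₙqₙ₊₁) > 2^-(2M+1)`.
-/

open GenContFract

namespace GenContFract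

variable {K : Type*}

theorem contsAux_mem [DivisionRing K] {g : GenContFract K} {S : Subring K} (hh : g.h ∈ S)
    (hs : ∀ n gp, g.s.get? n = some gp → gp.a ∈ S ∧ gp.b ∈ S) :
    ∀ n, (g.contsAux n).a ∈ S ∧ (g.contsAux n).b ∈ S
  | 0 => ⟨S.one_mem, S.zero_mem⟩
  | 1 => ⟨hh, S.one_mem⟩
  | n + 2 => by
    obtain ⟨hA₀, hB₀⟩ := contsAux_mem hh hs n
    obtain ⟨hA₁, hB₁⟩ := contsAux_mem hh hs (n + 1)
    cases hsn : g.s.get? n with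
    | none => rw [contsAux_stable_step_of_terminated hsn]; exact ⟨hA₁, hB₁⟩
    | some gp =>
      obtain ⟨ha, hb⟩ := hs n gp hsn
      rw [contsAux_recurrence hsn rfl rfl]
      exact ⟨add_mem (mul_mem hb hA₁) (mul_mem ha hA₀), add_mem (mul_mem hb hB₁) (mul_mem ha hB₀)⟩

variable [Field K] [LinearOrder K] [FloorRing K] {v : K} {n : ℕ}

theorem of_contsAux_mem_bot (v : K) (n : ℕ) :
    ((GenContFract.of v).contsAux n).a ∈ (⊥ : Subring K) ∧
      ((GenContFract.of v).contsAux n).b ∈ (⊥ : Subring K) := by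
  refine contsAux_mem (g := GenContFract.of v) (Subring.mem_bot.2 ⟨⌊v⌋, rfl⟩)
    (fun k gp hsk => ?_) n
  obtain ⟨ha, z, hz⟩ := of_partNum_eq_one_and_exists_int_partDen_eq hsk
  exact ⟨ha ▸ Subring.one_mem _, Subring.mem_bot.2 ⟨z, hz.symm⟩⟩

theorem of_nums_mem_bot (v : K) (n : ℕ) : (GenContFract.of v).nums n ∈ (⊥ : Subring K) :=
  (of_contsAux_mem_bot v (n + 1)).1

theorem of_dens_mem_bot (v : K) (n : ℕ) : (GenContFract.of v).dens n ∈ (⊥ : Subring K) :=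
  (of_contsAux_mem_bot v (n + 1)).2

theorem exists_isCoprime_of_nums_dens (h : ¬(GenContFract.of v).TerminatedAt n) :
    ∃ a b : ℤ, IsCoprime a b ∧
      (GenContFract.of v).nums n = a ∧ (GenContFract.of v).dens n = b := by
  obtain ⟨a, ha⟩ := Subring.mem_bot.1 (of_nums_mem_bot v n)
  obtain ⟨b, hb⟩ := Subring.mem_bot.1 (of_dens_mem_bot v n)
  obtain ⟨a', ha'⟩ := Subring.mem_bot.1 (of_nums_mem_bot v (n + 1))
  obtain ⟨b', hb'⟩ := Subring.mem_bot.1 (of_dens_mem_bot v (n + 1))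
  have hdet : a * b' - b * a' = (-1) ^ (n + 1) := by
    have : (GenContFract.of v).nums n * (GenContFract.of v).dens (n + 1) -
        (GenContFract.of v).dens n * (GenContFract.of v).nums (n + 1) = (-1) ^ (n + 1) :=
      SimpContFract.determinant (s := SimpContFract.of v) h
    rw [← ha, ← hb, ← ha', ← hb'] at this
    exact_mod_cast this
  refine ⟨a, b, ?_, ha.symm, hb.symm⟩
  rcases neg_one_pow_eq_or ℤ (n + 1) with h | h <;> rw [h] at hdet
  · exact ⟨b', -a', by linarith⟩
  · exact ⟨-b', a', by linarith⟩

variable [IsStrictOrderedRing K]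

theorem one_le_of_dens (v : K) (n : ℕ) : 1 ≤ (GenContFract.of v).dens n := by
  induction n with
  | zero => exact zeroth_den_eq_one.ge
  | succ n ih => exact ih.trans of_den_mono

theorem of_dens_monotone (v : K) : Monotone (GenContFract.of v).dens :=
  monotone_nat_of_le_succ fun _ => of_den_mono

theorem dens_eq_den_of_convs_eq (h : ¬(GenContFract.of v).TerminatedAt n) {r : ℚ}
    (hr : (GenContFract.of v).convs n = r) : (GenContFract.of v).dens n = r.den := by
  obtain ⟨a, b, hab, ha, hb⟩ := exists_isCoprime_of_nums_dens h
  have hb₀ : 0 < b := by exact_mod_cast hb ▸ zero_lt_one.trans_le (one_le_of_dens v n)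
  have hr' : r = a / b := by
    rw [conv_eq_num_div_den, ha, hb] at hr
    exact_mod_cast hr.symm
  have hden : (r.den : ℤ) = b :=
    hr' ▸ Rat.den_div_eq_of_coprime hb₀ (Int.isCoprime_iff_gcd_eq_one.1 hab)
  rw [hb, ← hden, Int.cast_natCast]

theorem abs_convs_sub_convs_succ (h : ¬(GenContFract.of v).TerminatedAt n) :
    |(GenContFract.of v).convs n - (GenContFract.of v).convs (n + 1)| =
      1 / ((GenContFract.of v).dens n * (GenContFract.of v).dens (n + 1)) := by
  have hdet : (GenContFract.of v).nums n * (GenContFract.of v).dens (n + 1) -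
      (GenContFract.of v).dens n * (GenContFract.of v).nums (n + 1) = (-1) ^ (n + 1) :=
    SimpContFract.determinant (s := SimpContFract.of v) h
  have hB₀ := zero_lt_one.trans_le (one_le_of_dens v n)
  have hB₁ := zero_lt_one.trans_le (one_le_of_dens v (n + 1))
  rw [conv_eq_num_div_den, conv_eq_num_div_den, div_sub_div _ _ hB₀.ne' hB₁.ne', hdet, abs_div,
    abs_neg_one_pow, abs_of_pos (mul_pos hB₀ hB₁)]

theorem dens_add_dens_succ_le (h : ¬(GenContFract.of v).TerminatedAt (n + 1)) :
    (GenContFract.of v).dens n + (GenContFract.of v).dens (n + 1) ≤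
      (GenContFract.of v).dens (n + 2) := by
  obtain ⟨gp, hs⟩ := Option.ne_none_iff_exists'.1 h
  have hb : 1 ≤ gp.b := of_one_le_get?_partDen (partDen_eq_s_b hs)
  rw [dens_recurrence hs rfl rfl, (of_partNum_eq_one_and_exists_int_partDen_eq hs).1]
  nlinarith [one_le_of_dens v (n + 1)]

theorem one_div_two_mul_dens_le_abs_sub_convs (h : ¬(GenContFract.of v).TerminatedAt (n + 1)) :
    1 / (2 * (GenContFract.of v).dens n * (GenContFract.of v).dens (n + 1)) ≤
      |v - (GenContFract.of v).convs n| := by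
  have hdiff := abs_convs_sub_convs_succ (mt (terminated_stable n.le_succ) h)
  have hB₀ := zero_lt_one.trans_le (one_le_of_dens v n)
  have hB₁ := zero_lt_one.trans_le (one_le_of_dens v (n + 1))
  set B := (GenContFract.of v).dens
  have hnext : |v - (GenContFract.of v).convs (n + 1)| ≤ 1 / (2 * B n * B (n + 1)) := by
    refine (abs_sub_convs_le h).trans (one_div_le_one_div_of_le (by positivity) ?_)
    nlinarith [dens_add_dens_succ_le h, (of_den_mono : B n ≤ B (n + 1))]
  have htri := abs_sub_le ((GenContFract.of v).convs n) v ((GenContFract.of v).convs (n + 1))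
  rw [abs_sub_comm _ v] at htri
  have : 1 / (B n * B (n + 1)) = 2 * (1 / (2 * B n * B (n + 1))) := by field_simp
  linarith

end GenContFract

theorem GenContFract.not_terminatedAt_of_irrational {t : ℝ} (ht : Irrational t) (n : ℕ) :
    ¬(GenContFract.of t).TerminatedAt n := fun h =>
  let ⟨r, hr⟩ := exists_rat_eq_of_terminates ⟨n, h⟩
  ht.ne_rat r hr

theorem Rat.den_intCast_div_natCast_le (p : ℤ) {q : ℕ} (hq : q ≠ 0) : ((p : ℚ) / q).den ≤ q := by
  have hdvd : (((p : ℚ) / q).den : ℤ) ∣ q := by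
    simpa only [Rat.divInt_eq_div, Int.cast_natCast] using Rat.den_dvd p q
  exact_mod_cast Int.le_of_dvd (by positivity) hdvd

/-- Legendre's theorem, plus the fact that convergents are in lowest terms. -/
theorem Irrational.exists_convs_eq_div_and_dens_le {t : ℝ} (ht : Irrational t) {p : ℤ} {q : ℕ}
    (hq : 0 < q) (h : |t - p / q| < 1 / (2 * (q : ℝ) ^ 2)) :
    ∃ n, (GenContFract.of t).convs n = p / q ∧ (GenContFract.of t).dens n ≤ q := by
  obtain ⟨r, hr, hden⟩ : ∃ r : ℚ, (r : ℝ) = p / q ∧ (r.den : ℝ) ≤ q :=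
    ⟨p / q, by push_cast; rfl, Nat.cast_le.2 (Rat.den_intCast_div_natCast_le p hq.ne')⟩
  have hlegendre : |t - r| < 1 / (2 * (r.den : ℝ) ^ 2) := by
    rw [hr]
    refine h.trans_le (one_div_le_one_div_of_le (by positivity) ?_)
    gcongr
  obtain ⟨n, hn⟩ := Real.exists_convs_eq_rat hlegendre
  refine ⟨n, hn.trans hr, ?_⟩
  rw [GenContFract.dens_eq_den_of_convs_eq (not_terminatedAt_of_irrational ht n) hn]
  exact hden

theorem stmt6_general (t : ℝ) (ht : Irrational t) (M : ℕ → ℕ)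
    (hM : ∀ m, 2 ≤ m → ((2:ℝ) ^ (M m - 1) - 1 ≤ (GenContFract.of t).dens m ∧
      (GenContFract.of t).dens m < 2 ^ (M m) - 1)) :
    ∀ m, 2 ≤ m → ∀ p : ℤ, ∀ q : ℕ, 1 ≤ q → (q : ℝ) < (GenContFract.of t).dens m →
      1 / 2 ^ (2 * M m + 1) < |t - (p : ℝ) / q| := by
  intro m hm p q hq hqm
  set B := (GenContFract.of t).dens
  have hBm : B m < 2 ^ M m := (hM m hm).2.trans (sub_lt_self _ one_pos)
  have hpow : (2 : ℝ) ^ (2 * M m + 1) = 2 * (2 ^ M m) ^ 2 := by ring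
  by_contra! hclose
  obtain ⟨n, hn, hBn⟩ := ht.exists_convs_eq_div_and_dens_le hq <| hclose.trans_lt <| by
    rw [hpow]
    exact one_div_lt_one_div_of_lt (by positivity) (by gcongr; exact hqm.trans hBm)
  have hnm : n < m := lt_of_not_ge fun hmn => (hBn.trans_lt hqm).not_ge (of_dens_monotone t hmn)
  have hBn1 : B (n + 1) < 2 ^ M m := (of_dens_monotone t hnm).trans_lt hBm
  have hlow := one_div_two_mul_dens_le_abs_sub_convs (not_terminatedAt_of_irrational ht (n + 1))
  rw [hn] at hlow
  have hBn₀ := one_le_of_dens t n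
  have hBn₁ := one_le_of_dens t (n + 1)
  have : 1 / (2 * (2 ^ M m) ^ 2) < 1 / (2 * B n * B (n + 1)) := by
    refine one_div_lt_one_div_of_lt (by positivity) ?_
    nlinarith
  rw [hpow] at hclose
  linarith

theorem stmt6 (t : ℝ) (ht : Irrational t) (ht1 : t ∈ Set.Ioo (0:ℝ) 1) (M : ℕ → ℕ)
    (hM : ∀ m, 2 ≤ m → ((2:ℝ) ^ (M m - 1) - 1 ≤ (GenContFract.of t).dens m ∧
      (GenContFract.of t).dens m < 2 ^ (M m) - 1)) :
    ∀ m, 2 ≤ m → ∀ p : ℤ, ∀ q : ℕ, 1 ≤ q → (q : ℝ) < (GenContFract.of t).dens m →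
      1 / 2 ^ (2 * M m + 1) < |t - (p : ℝ) / q| :=
  stmt6_general t ht M hM
end

section
/- Suppose s, t are irrational numbers, t = (a/b)s + c/d with integers a ≠ 0, b ≠ 0, d ≠ 0, and suppose there are strictly increasing sequences of positive integers (qₘ) and (q'ₘ) and integers (pₘ) such that |s − pₘ/qₘ| ≤ 8^{−Mₘ} for all m, where qₘ ≤ 2^{Lₘ}, q'ₘ ≥ 2^{Mₘ−4}, 2Lₘ < Mₘ for all m ≥ 2, Lₘ → ∞, and |t − p/q| > 2^{−(2Mₘ+1)} for all integers p and all positive integers q < q'ₘ. Then a contradiction follows; i.e., no such configuration exists. -/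
/-!
Transport the approximations `p m / q m` of `s` along the affine map `s ↦ (a/b) s + c/d`:
this gives rationals with denominator `|b d| q m ≤ |b d| 2^{L m}`, which is below `q' m` once
`2^{L m}` exceeds `8 |b d|`, and which approximate `t` within `|a| 8^{-M m}`. Once `2^{L m} ≥ |a|`
that error is at most `2^{-(2 M m + 1)}`, contradicting the hypothesis on `t`.
-/

open Filter

lemma exists_affine_sub_div_eq (a b c d p : ℤ) {q : ℕ} (hb : b ≠ 0) (hd : d ≠ 0) (hq : q ≠ 0)
    (s : ℝ) : ∃ P : ℤ, ((a : ℝ) / b * s + (c : ℝ) / d) - P / ((b * d).natAbs * q : ℕ)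
      = (a : ℝ) / b * (s - (p : ℝ) / q) := by
  refine ⟨(b * d).sign * (a * p * d + c * b * q), ?_⟩
  have hbd : ((b * d).natAbs : ℝ) = ((b * d).sign : ℝ) * b * d := by
    rw [← Int.cast_natCast, ← Int.sign_mul_self_eq_natAbs]; push_cast; ring
  have hsign : ((b * d).sign : ℝ) ≠ 0 := by simp [hb, hd]
  have hbR : (b : ℝ) ≠ 0 := Int.cast_ne_zero.mpr hb
  have hdR : (d : ℝ) ≠ 0 := Int.cast_ne_zero.mpr hd
  have hqR : (q : ℝ) ≠ 0 := Nat.cast_ne_zero.mpr hq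
  rw [Nat.cast_mul, hbd]
  push_cast
  field_simp
  ring

lemma mul_lt_two_zpow_sub_four {k x : ℝ} {L M : ℕ} (hk : 0 ≤ k) (hkL : 8 * k < 2 ^ L)
    (hxL : x ≤ 2 ^ L) (hLM : 2 * L < M) : k * x < 2 ^ ((M : ℤ) - 4) := by
  have hL : (0 : ℝ) < 2 ^ L := by positivity
  calc k * x ≤ k * 2 ^ L := mul_le_mul_of_nonneg_left hxL hk
    _ < 2 ^ L / 8 * 2 ^ L := by gcongr; linarith
    _ = 2 ^ ((2 * L + 1 : ℕ) : ℤ) * 2 ^ (-4 : ℤ) := by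
      rw [zpow_natCast]; norm_num; ring
    _ ≤ 2 ^ (M : ℤ) * 2 ^ (-4 : ℤ) := by gcongr <;> norm_num; omega
    _ = 2 ^ ((M : ℤ) - 4) := by rw [← zpow_add₀ two_ne_zero]; rfl

lemma mul_eight_zpow_neg_le {A : ℝ} {L M : ℕ} (hA : A ≤ 2 ^ L) (hLM : L < M) :
    A * 8 ^ (-(M : ℤ)) ≤ 2 ^ (-(2 * (M : ℤ) + 1)) := by
  have h8 : (8 : ℝ) ^ (-(M : ℤ)) = 2 ^ (-(3 * (M : ℤ))) := by
    rw [show (8 : ℝ) = 2 ^ (3 : ℤ) by norm_num, ← zpow_mul]; ring_nf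
  rw [h8]
  calc A * 2 ^ (-(3 * (M : ℤ))) ≤ 2 ^ (L : ℤ) * 2 ^ (-(3 * (M : ℤ))) := by
        rw [zpow_natCast]; gcongr
    _ = 2 ^ ((L : ℤ) - 3 * M) := by rw [← zpow_add₀ two_ne_zero]; ring_nf
    _ ≤ 2 ^ (-(2 * (M : ℤ) + 1)) := by gcongr <;> norm_num; omega

lemma abs_intCast_div_le (a : ℤ) {b : ℤ} (hb : b ≠ 0) : |(a : ℝ) / b| ≤ |(a : ℝ)| := by
  rw [abs_div]
  exact div_le_self (abs_nonneg _) (by exact_mod_cast Int.one_le_abs hb)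

theorem stmt7_general (s t : ℝ)
    (a b c d : ℤ) (hb : b ≠ 0) (hd : d ≠ 0)
    (hrel : t = ((a : ℝ) / b) * s + (c : ℝ) / d)
    (q q' : ℕ → ℕ) (p : ℕ → ℤ) (L M : ℕ → ℕ)
    (hqpos : ∀ m, 0 < q m)
    (happrox : ∀ m, 2 ≤ m → |s - (p m : ℝ) / q m| ≤ (8 : ℝ) ^ (-(M m : ℤ)))
    (hqL : ∀ m, 2 ≤ m → (q m : ℝ) ≤ 2 ^ L m)
    (hq'M : ∀ m, 2 ≤ m → (2 : ℝ) ^ ((M m : ℤ) - 4) ≤ q' m)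
    (hLM : ∀ m, 2 ≤ m → 2 * L m < M m)
    (hLtop : Filter.Tendsto L Filter.atTop Filter.atTop)
    (htapprox : ∀ m, 2 ≤ m → ∀ pp : ℤ, ∀ qq : ℕ, 0 < qq → qq < q' m →
      (2 : ℝ) ^ (-(2 * (M m : ℤ) + 1)) < |t - (pp : ℝ) / qq|) :
    False := by
  have hpow : Tendsto (fun m ↦ (2 : ℝ) ^ L m) atTop atTop :=
    (tendsto_pow_atTop_atTop_of_one_lt one_lt_two).comp hLtop
  obtain ⟨m, hm, hbdL, haL⟩ := ((eventually_ge_atTop 2).and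
    ((hpow.eventually_gt_atTop (8 * ((b * d).natAbs : ℝ))).and
      (hpow.eventually_ge_atTop |(a : ℝ)|))).exists
  obtain ⟨P, hP⟩ := exists_affine_sub_div_eq a b c d (p m) hb hd (hqpos m).ne' s
  have hQ : (b * d).natAbs * q m < q' m := by
    have := (mul_lt_two_zpow_sub_four (by positivity) hbdL (hqL m hm) (hLM m hm)).trans_le
      (hq'M m hm)
    exact_mod_cast this
  have hQpos : 0 < (b * d).natAbs * q m :=
    Nat.mul_pos (Int.natAbs_pos.mpr (mul_ne_zero hb hd)) (hqpos m)
  refine (htapprox m hm P _ hQpos hQ).not_ge ?_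
  rw [hrel, hP, abs_mul]
  calc |(a : ℝ) / b| * |s - (p m : ℝ) / q m| ≤ |(a : ℝ)| * 8 ^ (-(M m : ℤ)) :=
        mul_le_mul (abs_intCast_div_le a hb) (happrox m hm) (abs_nonneg _) (abs_nonneg _)
    _ ≤ 2 ^ (-(2 * (M m : ℤ) + 1)) := mul_eight_zpow_neg_le haL (by have := hLM m hm; omega)

theorem stmt7 (s t : ℝ) (hs : Irrational s) (ht : Irrational t)
    (a b c d : ℤ) (ha : a ≠ 0) (hb : b ≠ 0) (hd : d ≠ 0)
    (hrel : t = ((a : ℝ) / b) * s + (c : ℝ) / d)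
    (q q' : ℕ → ℕ) (p : ℕ → ℤ) (L M : ℕ → ℕ)
    (hqmono : StrictMono q) (hq'mono : StrictMono q')
    (hqpos : ∀ m, 0 < q m) (hq'pos : ∀ m, 0 < q' m)
    (happrox : ∀ m, 2 ≤ m → |s - (p m : ℝ) / q m| ≤ (8 : ℝ) ^ (-(M m : ℤ)))
    (hqL : ∀ m, 2 ≤ m → (q m : ℝ) ≤ 2 ^ L m)
    (hq'M : ∀ m, 2 ≤ m → (2 : ℝ) ^ ((M m : ℤ) - 4) ≤ q' m)
    (hLM : ∀ m, 2 ≤ m → 2 * L m < M m)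
    (hLtop : Filter.Tendsto L Filter.atTop Filter.atTop)
    (htapprox : ∀ m, 2 ≤ m → ∀ pp : ℤ, ∀ qq : ℕ, 0 < qq → qq < q' m →
      (2 : ℝ) ^ (-(2 * (M m : ℤ) + 1)) < |t - (pp : ℝ) / qq|) :
    False :=
  stmt7_general s t a b c d hb hd hrel q q' p L M hqpos happrox hqL hq'M hLM hLtop htapprox
end

section
/- There exists an IFS Φ of contracting similarities on ℝ without exact overlaps such that lim_{n→∞} (log Δₙ)/n = −∞, where Δₙ = min{d(α,β) : α, β ∈ Iⁿ, α ≠ β} and d(α,β) = |φ_α(0) − φ_β(0)| if the contraction ratios r_α, r_β are equal and d(α,β) = ∞ otherwise. -/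
noncomputable def compIFS {k : ℕ} (r c : Fin k → ℝ) (l : List (Fin k)) : ℝ → ℝ :=
  l.foldr (fun i g => (fun x => r i * x + c i) ∘ g) id

noncomputable def ratioIFS {k : ℕ} (r : Fin k → ℝ) (l : List (Fin k)) : ℝ :=
  (l.map r).prod

noncomputable def DeltaIFS {k : ℕ} (r c : Fin k → ℝ) (n : ℕ) : ℝ :=
  sInf {x : ℝ | ∃ α β : List (Fin k), α.length = n ∧ β.length = n ∧ α ≠ β ∧
    ratioIFS r α = ratioIFS r β ∧ x = |compIFS r c α 0 - compIFS r c β 0|}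

/-!
The maps are `x ↦ x / 8 + t` with `t ∈ {0, 1, θ 0, θ 1}`, where `θ ε = ∑ᵢ 8 ^ (-M (2 i + ε))` and
`M j = 2 ^ 2 ^ j`. All ratios agree, so `φ_α (0)` is a base-`8` expansion and equals
`8 ^ (1 - n) (A + B θ 0 + C θ 1)` with integers `A, B, C` recording where the letters `1, 2, 3`
occur in `α`. The gaps of the lacunary digit sequence `M j` grow so fast that `1, θ 0, θ 1` are
linearly independent over `ℤ`; hence `φ_α = φ_β` forces `A, B, C` and then `α` to agree.

Conversely, if `M K < n ≤ M (K + 1)`, the one-letter word for `θ (K % 2)` padded with zeros and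
the word carrying the digits of `θ (K % 2)` at the positions `M (2 i + K % 2) ≤ M K` have length
`n` and differ by a tail starting at `M (K + 2) = M (K + 1) ^ 2 ≥ n ^ 2`, so `Δₙ ≤ 2 · 8 ^ (-n²)`.
Interleaving two numbers is what makes this work for every `n` and not only along a subsequence.
-/

section IFS

variable {k : ℕ}

theorem compIFS_cons (r c : Fin k → ℝ) (a : Fin k) (l : List (Fin k)) (x : ℝ) :
    compIFS r c (a :: l) x = r a * compIFS r c l x + c a :=
  rfl

theorem ratioIFS_const (ρ : ℝ) (l : List (Fin k)) : ratioIFS (fun _ => ρ) l = ρ ^ l.length := by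
  simp [ratioIFS]

theorem compIFS_replicate_zero (r c : Fin k → ℝ) {a : Fin k} (ha : c a = 0) (m : ℕ) :
    compIFS r c (List.replicate m a) 0 = 0 := by
  induction m with
  | zero => rfl
  | succ m ih => rw [List.replicate_succ, compIFS_cons, ih, ha, mul_zero, add_zero]

theorem compIFS_ofFn_zero (ρ : ℝ) (c : Fin k → ℝ) {n : ℕ} (f : Fin n → Fin k) :
    compIFS (fun _ => ρ) c (List.ofFn f) 0 = ∑ j, c (f j) * ρ ^ (j : ℕ) := by
  induction n with
  | zero => simp [compIFS]
  | succ n ih =>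
    rw [List.ofFn_succ, compIFS_cons, ih, Fin.sum_univ_succ, Finset.mul_sum]
    simp only [Fin.val_zero, Fin.val_succ, pow_zero, mul_one, pow_succ]
    rw [add_comm]
    congr 1
    exact Finset.sum_congr rfl fun j _ => by ring

def letterNum (b : ℕ) (a : Fin k) : List (Fin k) → ℕ
  | [] => 0
  | x :: l => (if x = a then b ^ l.length else 0) + letterNum b a l

theorem pow_length_mul_compIFS_zero {b : ℕ} (hb : b ≠ 0) (c : Fin k → ℝ) (l : List (Fin k)) :
    (b : ℝ) ^ l.length * compIFS (fun _ => (b : ℝ)⁻¹) c l 0 =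
      b * ∑ a, c a * letterNum b a l := by
  induction l with
  | nil => simp [compIFS, letterNum]
  | cons x l ih =>
    have hb' : (b : ℝ) ≠ 0 := Nat.cast_ne_zero.mpr hb
    have hx : ∑ a, c a * ((if x = a then b ^ l.length else 0 : ℕ) : ℝ) = c x * b ^ l.length := by
      simp
    simp only [compIFS_cons, letterNum, List.length_cons, Nat.cast_add, mul_add,
      Finset.sum_add_distrib, hx, ← ih]
    field_simp
    ring

theorem compIFS_digits_mem_Ico {b : ℕ} (hb : 0 < b) (hkb : k ≤ b) (l : List (Fin k)) :
    compIFS (fun _ => (b : ℝ)⁻¹) (fun a => (a : ℝ)) l 0 ∈ Set.Ico 0 (b : ℝ) := by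
  induction l with
  | nil => simpa [compIFS] using hb
  | cons x l ih =>
    obtain ⟨h0, hb'⟩ := ih
    have hx : (x : ℝ) + 1 ≤ b := by exact_mod_cast x.isLt.trans_le hkb
    have hbpos : (0 : ℝ) < b := by exact_mod_cast hb
    rw [compIFS_cons]
    constructor
    · positivity
    · calc (b : ℝ)⁻¹ * compIFS (fun _ => (b : ℝ)⁻¹) (fun a => (a : ℝ)) l 0 + x
          < (b : ℝ)⁻¹ * b + x := by gcongr
        _ ≤ b := by rw [inv_mul_cancel₀ hbpos.ne']; linarith

theorem compIFS_digits_injective {b : ℕ} (hb : 0 < b) (hkb : k ≤ b) :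
    ∀ {α β : List (Fin k)}, α.length = β.length →
      compIFS (fun _ => (b : ℝ)⁻¹) (fun a => (a : ℝ)) α 0 =
        compIFS (fun _ => (b : ℝ)⁻¹) (fun a => (a : ℝ)) β 0 → α = β
  | [], [], _, _ => rfl
  | x :: α, y :: β, hlen, h => by
    have hbpos : (0 : ℝ) < b := by exact_mod_cast hb
    have hfrac : ∀ l : List (Fin k), 0 ≤ (b : ℝ)⁻¹ * compIFS (fun _ => (b : ℝ)⁻¹)
        (fun a => (a : ℝ)) l 0 ∧ (b : ℝ)⁻¹ * compIFS (fun _ => (b : ℝ)⁻¹)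
        (fun a => (a : ℝ)) l 0 < 1 := fun l => by
      obtain ⟨h0, hlt⟩ := compIFS_digits_mem_Ico hb hkb l
      exact ⟨by positivity, by rwa [inv_mul_lt_iff₀ hbpos, mul_one]⟩
    obtain ⟨hα0, hα1⟩ := hfrac α
    obtain ⟨hβ0, hβ1⟩ := hfrac β
    rw [compIFS_cons, compIFS_cons] at h
    have hxy : x = y := Fin.ext <| by
      have : (x : ℕ) < y + 1 := by exact_mod_cast (by linarith : (x : ℝ) < y + 1)
      have : (y : ℕ) < x + 1 := by exact_mod_cast (by linarith : (y : ℝ) < x + 1)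
      omega
    subst hxy
    rw [compIFS_digits_injective hb hkb (Nat.succ.inj hlen)
      (mul_left_cancel₀ (inv_ne_zero hbpos.ne') (add_right_cancel h))]

theorem DeltaIFS_le {r c : Fin k → ℝ} {n : ℕ} {α β : List (Fin k)} (hα : α.length = n)
    (hβ : β.length = n) (hne : α ≠ β) (hr : ratioIFS r α = ratioIFS r β) :
    DeltaIFS r c n ≤ |compIFS r c α 0 - compIFS r c β 0| :=
  csInf_le ⟨0, by rintro x ⟨-, -, -, -, -, -, rfl⟩; exact abs_nonneg _⟩ ⟨α, β, hα, hβ, hne, hr, rfl⟩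

theorem DeltaIFS_pos {r c : Fin k → ℝ} {n : ℕ}
    (hsep : ∀ α β : List (Fin k), α.length = n → β.length = n → α ≠ β →
      ratioIFS r α = ratioIFS r β → compIFS r c α 0 ≠ compIFS r c β 0)
    (hne : ∃ α β : List (Fin k), α.length = n ∧ β.length = n ∧ α ≠ β ∧
      ratioIFS r α = ratioIFS r β) :
    0 < DeltaIFS r c n := by
  set S := {x : ℝ | ∃ α β : List (Fin k), α.length = n ∧ β.length = n ∧ α ≠ β ∧
    ratioIFS r α = ratioIFS r β ∧ x = |compIFS r c α 0 - compIFS r c β 0|}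
  have hfin : S.Finite := by
    refine (((List.finite_length_eq _ n).prod (List.finite_length_eq _ n)).image
      fun p : List (Fin k) × List (Fin k) => |compIFS r c p.1 0 - compIFS r c p.2 0|).subset ?_
    rintro x ⟨α, β, hα, hβ, -, -, rfl⟩
    exact ⟨(α, β), ⟨hα, hβ⟩, rfl⟩
  obtain ⟨α, β, hα, hβ, hαβ, hr⟩ := hne
  obtain ⟨α, β, hα, hβ, hαβ, hr, hx⟩ := Set.Nonempty.csInf_mem
    (⟨_, α, β, hα, hβ, hαβ, hr, rfl⟩ : S.Nonempty) hfin
  change 0 < sInf S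
  rw [hx, abs_pos, sub_ne_zero]
  exact hsep α β hα hβ hαβ hr

end IFS

namespace LacunaryIFS

def M (j : ℕ) : ℕ := 2 ^ 2 ^ j

theorem M_succ (j : ℕ) : M (j + 1) = M j ^ 2 := by
  rw [M, M, pow_succ, pow_mul]

theorem add_two_le_M (j : ℕ) : j + 2 ≤ M j := by
  induction j with
  | zero => simp [M]
  | succ j ih => rw [M_succ]; nlinarith

theorem M_strictMono : StrictMono M :=
  strictMono_nat_of_lt_succ fun j => by
    have := add_two_le_M j
    rw [M_succ]
    nlinarith

theorem lt_eight_pow_M (j : ℕ) : j < 8 ^ M j :=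
  (add_two_le_M j).trans_lt' (by omega) |>.trans (Nat.lt_pow_self (by norm_num))

noncomputable def w (j : ℕ) : ℝ := 8⁻¹ ^ M j

theorem w_pos (j : ℕ) : 0 < w j := by unfold w; positivity

theorem w_antitone : Antitone w := fun _ _ h =>
  pow_le_pow_of_le_one (by norm_num) (by norm_num) (M_strictMono.monotone h)

theorem w_add_le (i j : ℕ) : w (i + j) ≤ 8⁻¹ ^ i * w j := by
  rw [w, w, ← pow_add]
  exact pow_le_pow_of_le_one (by norm_num) (by norm_num) (M_strictMono.add_le_nat i j)

theorem w_succ_le_sq (j : ℕ) : w (j + 1) ≤ w j ^ 2 := by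
  rw [w, w, M_succ, ← pow_mul]
  exact pow_le_pow_of_le_one (by norm_num) (by norm_num) (by nlinarith [add_two_le_M j])

theorem w_mul_eight_pow {i j : ℕ} (h : i ≤ j) : w i * 8 ^ M j = 8 ^ (M j - M i) := by
  rw [w, pow_sub₀ _ (by norm_num) (M_strictMono.monotone h), inv_pow, mul_comm]

theorem summable_w : Summable w := by
  refine (summable_geometric_of_lt_one (by norm_num) (by norm_num : (8 : ℝ)⁻¹ < 1)).mul_right
    (w 0) |>.of_nonneg_of_le (fun j => (w_pos j).le) fun j => ?_
  simpa using w_add_le j 0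

theorem tsum_w_add_le (j : ℕ) : ∑' i, w (i + j) ≤ 2 * w j := by
  have hgeom := summable_geometric_of_lt_one (by norm_num) (by norm_num : (8 : ℝ)⁻¹ < 1)
  calc ∑' i, w (i + j) ≤ ∑' i, 8⁻¹ ^ i * w j :=
        (summable_w.comp_injective (add_left_injective j)).tsum_le_tsum (w_add_le · j)
          (hgeom.mul_right _)
    _ = 8 / 7 * w j := by
        rw [tsum_mul_right, tsum_geometric_of_lt_one (by norm_num) (by norm_num)]
        norm_num
    _ ≤ 2 * w j := by linarith [w_pos j]

theorem exists_int_eq_mul_eight_pow (c : ℕ → ℤ) (p : ℤ) (m : ℕ) :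
    ∃ z : ℤ, (z : ℝ) = (p + ∑ j ∈ Finset.range (m + 1), c j * w j) * 8 ^ M m := by
  refine ⟨p * 8 ^ M m + ∑ j ∈ Finset.range (m + 1), c j * 8 ^ (M m - M j), ?_⟩
  rw [add_mul, Finset.sum_mul]
  push_cast
  congr 1
  refine Finset.sum_congr rfl fun j hj => ?_
  rw [mul_assoc, w_mul_eight_pow (Nat.lt_succ_iff.mp (Finset.mem_range.mp hj))]

section IntegerCoefficients

variable {c : ℕ → ℤ} {Q : ℕ} (hc : ∀ j, |c j| ≤ Q)
include hc

theorem norm_int_mul_w_le (j : ℕ) : ‖(c j : ℝ) * w j‖ ≤ Q * w j := by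
  rw [norm_mul, Real.norm_eq_abs, Real.norm_of_nonneg (w_pos j).le, ← Int.cast_abs]
  exact mul_le_mul_of_nonneg_right (by exact_mod_cast hc j) (w_pos j).le

theorem summable_int_mul_w : Summable fun j => (c j : ℝ) * w j :=
  (summable_w.mul_left (Q : ℝ)).of_norm_bounded (norm_int_mul_w_le hc)

theorem abs_tsum_int_mul_w_le (m : ℕ) :
    |∑' i, (c (i + m) : ℝ) * w (i + m)| ≤ 2 * Q * w m := by
  have hs : Summable fun i => (c (i + m) : ℝ) * w (i + m) :=
    (summable_int_mul_w hc).comp_injective (add_left_injective m)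
  calc |∑' i, (c (i + m) : ℝ) * w (i + m)| ≤ ∑' i, Q * w (i + m) := by
        refine (norm_tsum_le_tsum_norm hs.norm).trans (hs.norm.tsum_le_tsum
          (fun i => norm_int_mul_w_le hc (i + m))
          ((summable_w.comp_injective (add_left_injective m)).mul_left _))
    _ = Q * ∑' i, w (i + m) := tsum_mul_left
    _ ≤ Q * (2 * w m) := mul_le_mul_of_nonneg_left (tsum_w_add_le m) (Nat.cast_nonneg Q)
    _ = 2 * Q * w m := by ring

/-- Multiplied by `8 ^ M m`, the tail after `m` is an integer, and it is smaller than
`2 Q w (m + 1) ≤ 2 Q w m ^ 2 < w m = 8 ^ (-M m)`. -/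
theorem tsum_tail_eq_zero {p : ℤ} (h : p + ∑' j, c j * w j = 0) {m : ℕ}
    (hm : 2 * Q < 8 ^ M m) : ∑' i, (c (i + (m + 1)) : ℝ) * w (i + (m + 1)) = 0 := by
  set E := ∑' i, (c (i + (m + 1)) : ℝ) * w (i + (m + 1))
  obtain ⟨z, hz⟩ := exists_int_eq_mul_eight_pow c p m
  rw [← (summable_int_mul_w hc).sum_add_tsum_nat_add (m + 1), ← add_assoc] at h
  rw [eq_neg_of_add_eq_zero_left h] at hz
  have hunit : w m * 8 ^ M m = 1 := by rw [w_mul_eight_pow le_rfl, Nat.sub_self, pow_zero]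
  have hQ : (2 * Q : ℝ) * w m < 1 := by
    rw [← hunit, mul_comm (w m)]
    exact mul_lt_mul_of_pos_right (by exact_mod_cast hm : (2 * Q : ℝ) < 8 ^ M m) (w_pos m)
  have hE : |E| < w m :=
    calc |E| ≤ 2 * Q * w (m + 1) := abs_tsum_int_mul_w_le hc (m + 1)
      _ ≤ 2 * Q * w m ^ 2 := by gcongr; exact w_succ_le_sq m
      _ = (2 * Q * w m) * w m := by ring
      _ < w m := mul_lt_of_lt_one_left (w_pos m) hQ
  have hz1 : |(z : ℝ)| < 1 := by
    rw [hz, abs_mul, abs_neg, abs_of_pos (by positivity : (0 : ℝ) < 8 ^ M m), ← hunit]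
    exact mul_lt_mul_of_pos_right hE (by positivity)
  have hz0 : z = 0 := Int.abs_lt_one_iff.mp (by exact_mod_cast hz1)
  rw [hz0, Int.cast_zero, eq_comm, mul_eq_zero, neg_eq_zero] at hz
  exact hz.resolve_right (by positivity)

theorem eq_zero_of_add_tsum_eq_zero {p : ℤ} (h : p + ∑' j, c j * w j = 0) {m : ℕ}
    (hm : 2 * Q < 8 ^ M m) : c (m + 1) = 0 := by
  have hm' : 2 * Q < 8 ^ M (m + 1) :=
    hm.trans_le (Nat.pow_le_pow_right (by norm_num) (M_strictMono.monotone m.le_succ))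
  have hsplit := ((summable_int_mul_w hc).comp_injective
    (add_left_injective (m + 1))).tsum_eq_zero_add
  simp only [Function.comp_def, zero_add, tsum_tail_eq_zero hc h hm] at hsplit
  rw [tsum_congr fun i => by rw [add_right_comm, add_assoc], tsum_tail_eq_zero hc h hm',
    add_zero, eq_comm, mul_eq_zero] at hsplit
  exact_mod_cast hsplit.resolve_right (w_pos _).ne'

end IntegerCoefficients

noncomputable def θ (ε : ℕ) : ℝ := ∑' i, w (2 * i + ε)

theorem summable_w_two_mul_add (ε : ℕ) : Summable fun i => w (2 * i + ε) :=
  summable_w.comp_injective fun _ _ h => by omega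

theorem int_add_mul_θ_eq_zero {p q s : ℤ} (h : p + q * θ 0 + s * θ 1 = 0) :
    p = 0 ∧ q = 0 ∧ s = 0 := by
  set c : ℕ → ℤ := fun j => if Even j then q else s
  set Q := q.natAbs + s.natAbs
  have hc : ∀ j, |c j| ≤ Q := fun j => by
    simp only [c, Q]
    split_ifs <;> rw [Int.abs_eq_natAbs] <;> omega
  have hseries : q * θ 0 + s * θ 1 = ∑' j, c j * w j := by
    rw [← tsum_even_add_odd]
    · simp [c, θ, tsum_mul_left, parity_simps]
    · simpa [c, parity_simps] using (summable_w_two_mul_add 0).mul_left (q : ℝ)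
    · simpa [c, parity_simps] using (summable_w_two_mul_add 1).mul_left (s : ℝ)
  rw [add_assoc, hseries] at h
  have hQ : ∀ m, 2 * Q ≤ m → 2 * Q < 8 ^ M m := fun m hm => hm.trans_lt (lt_eight_pow_M m)
  have hq : q = 0 := by
    simpa [c, parity_simps] using eq_zero_of_add_tsum_eq_zero hc h (hQ (2 * Q + 1) (by omega))
  have hs : s = 0 := by
    simpa [c, parity_simps] using eq_zero_of_add_tsum_eq_zero hc h (hQ (2 * Q) le_rfl)
  rw [← hseries, hq, hs] at h
  exact ⟨by simpa using h, hq, hs⟩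

noncomputable def transl : Fin 4 → ℝ := ![0, 1, θ 0, θ 1]

local notation "Φ" => compIFS (fun _ => (8 : ℝ)⁻¹) transl

theorem pow_length_mul_compIFS_transl (l : List (Fin 4)) :
    (8 : ℝ) ^ l.length * Φ l 0 =
      8 * (letterNum 8 1 l + letterNum 8 2 l * θ 0 + letterNum 8 3 l * θ 1) := by
  have := pow_length_mul_compIFS_zero (b := 8) (by norm_num) transl l
  push_cast at this
  rw [this, Fin.sum_univ_four]
  simp [transl]
  ring

theorem compIFS_transl_injective {α β : List (Fin 4)} (hlen : α.length = β.length)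
    (h : Φ α 0 = Φ β 0) : α = β := by
  have hα := pow_length_mul_compIFS_transl α
  rw [hlen] at hα
  obtain ⟨h1, h2, h3⟩ := int_add_mul_θ_eq_zero
    (p := letterNum 8 1 α - letterNum 8 1 β) (q := letterNum 8 2 α - letterNum 8 2 β)
    (s := letterNum 8 3 α - letterNum 8 3 β)
    (by push_cast; linear_combination (pow_length_mul_compIFS_transl β - hα + 8 ^ β.length * h) / 8)
  have hnum : ∀ a : Fin 4, letterNum 8 a α = letterNum 8 a β ∨ a = 0 := by
    intro a
    fin_cases a <;> simp <;> omega
  refine compIFS_digits_injective (b := 8) (by norm_num) (by norm_num) hlen ?_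
  refine mul_left_cancel₀ (pow_ne_zero α.length (by norm_num : ((8 : ℕ) : ℝ) ≠ 0)) ?_
  rw [pow_length_mul_compIFS_zero (by norm_num), hlen, pow_length_mul_compIFS_zero (by norm_num)]
  congr 2
  ext a
  rcases hnum a with h | rfl
  · rw [h]
  · simp

theorem θ_sub_sum_range (ε J : ℕ) :
    θ ε - ∑ i ∈ Finset.range J, w (2 * i + ε) = ∑' i, w (2 * (i + J) + ε) := by
  rw [θ, ← (summable_w_two_mul_add ε).sum_add_tsum_nat_add J, add_sub_cancel_left]

theorem θ_sub_sum_range_pos (ε J : ℕ) : 0 < θ ε - ∑ i ∈ Finset.range J, w (2 * i + ε) := by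
  rw [θ_sub_sum_range]
  exact ((summable_w_two_mul_add ε).comp_injective (add_left_injective J)).tsum_pos
    (fun _ => (w_pos _).le) 0 (w_pos _)

theorem θ_sub_sum_range_le (ε J : ℕ) :
    θ ε - ∑ i ∈ Finset.range J, w (2 * i + ε) ≤ 2 * w (2 * J + ε) := by
  rw [θ_sub_sum_range]
  refine le_trans ?_ (tsum_w_add_le (2 * J + ε))
  exact ((summable_w_two_mul_add ε).comp_injective (add_left_injective J)).tsum_le_tsum
    (fun i => w_antitone (by omega)) (summable_w.comp_injective (add_left_injective _))

def truncationWord (ε J n : ℕ) : List (Fin 4) :=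
  List.ofFn fun j : Fin n =>
    if (j : ℕ) ∈ (Finset.range J).image (fun i => M (2 * i + ε)) then 1 else 0

theorem compIFS_truncationWord {ε J n : ℕ} (h : ∀ i < J, M (2 * i + ε) < n) :
    Φ (truncationWord ε J n) 0 = ∑ i ∈ Finset.range J, w (2 * i + ε) := by
  set S := (Finset.range J).image (fun i => M (2 * i + ε))
  have hS : S ⊆ Finset.range n := by simpa [S, Finset.image_subset_iff] using h
  have hinj : Set.InjOn (fun i => M (2 * i + ε)) (Finset.range J) := fun i _ i' _ hii' => by
    have := M_strictMono.injective hii'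
    omega
  have hterm : ∀ j : ℕ, transl (if j ∈ S then 1 else 0) * 8⁻¹ ^ j =
      if j ∈ S then (8⁻¹ : ℝ) ^ j else 0 := fun j => by split_ifs <;> simp [transl]
  rw [truncationWord, compIFS_ofFn_zero, Finset.sum_congr rfl fun (j : Fin n) _ => hterm j,
    Fin.sum_univ_eq_sum_range (fun j => if j ∈ S then (8⁻¹ : ℝ) ^ j else 0),
    Finset.sum_ite_mem, Finset.inter_eq_right.mpr hS, Finset.sum_image hinj]
  rfl

theorem exists_M_lt_le {n : ℕ} (hn : M 0 < n) : ∃ K, M K < n ∧ n ≤ M (K + 1) := by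
  have hex : ∃ k, n ≤ M k := ⟨n, by linarith [add_two_le_M n]⟩
  have hpos : Nat.find hex ≠ 0 := fun h0 => by
    have := Nat.find_spec hex
    rw [h0] at this
    omega
  refine ⟨Nat.find hex - 1, ?_, ?_⟩
  · exact not_le.mp (Nat.find_min hex (by omega))
  · rw [Nat.sub_add_cancel (Nat.one_le_iff_ne_zero.mpr hpos)]
    exact Nat.find_spec hex

theorem exists_close_words {n : ℕ} (hn : 2 < n) :
    ∃ α β : List (Fin 4), α.length = n ∧ β.length = n ∧
      0 < Φ α 0 - Φ β 0 ∧ Φ α 0 - Φ β 0 ≤ 2 * 8⁻¹ ^ n ^ 2 := by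
  obtain ⟨K, hKn, hnK⟩ := exists_M_lt_le (by simpa [M] using hn)
  obtain ⟨a, ha⟩ : ∃ a, transl a = θ (K % 2) := by
    rcases Nat.mod_two_eq_zero_or_one K with h | h
    · exact ⟨2, by rw [h]; rfl⟩
    · exact ⟨3, by rw [h]; rfl⟩
  have hα : Φ (a :: List.replicate (n - 1) 0) 0 = θ (K % 2) := by
    rw [compIFS_cons, compIFS_replicate_zero _ _ rfl, mul_zero, zero_add, ha]
  have hβ := compIFS_truncationWord (ε := K % 2) (J := K / 2 + 1) (n := n) fun i hi =>
    (M_strictMono.monotone (by omega : 2 * i + K % 2 ≤ K)).trans_lt hKn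
  refine ⟨a :: List.replicate (n - 1) 0, truncationWord (K % 2) (K / 2 + 1) n, by simp; omega,
    by simp [truncationWord], ?_⟩
  rw [hα, hβ]
  refine ⟨θ_sub_sum_range_pos _ _, (θ_sub_sum_range_le _ _).trans ?_⟩
  rw [show 2 * (K / 2 + 1) + K % 2 = K + 1 + 1 by omega, w, M_succ]
  exact mul_le_mul_of_nonneg_left
    (pow_le_pow_of_le_one (by norm_num) (by norm_num) (Nat.pow_le_pow_left hnK 2)) zero_le_two

theorem log_DeltaIFS_div_le {n : ℕ} (hn : 2 < n) :
    Real.log (DeltaIFS (fun _ => 8⁻¹) transl n) / n ≤ -n := by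
  obtain ⟨α, β, hα, hβ, hpos, hle⟩ := exists_close_words hn
  have hαβ : α ≠ β := by rintro rfl; simp at hpos
  have hr : ratioIFS (fun _ => (8 : ℝ)⁻¹) α = ratioIFS (fun _ => 8⁻¹) β := by
    rw [ratioIFS_const, ratioIFS_const, hα, hβ]
  have hΔpos : 0 < DeltaIFS (fun _ => 8⁻¹) transl n :=
    DeltaIFS_pos (fun α β hα hβ hne _ h => hne (compIFS_transl_injective (hα.trans hβ.symm) h))
      ⟨α, β, hα, hβ, hαβ, hr⟩
  have hΔle : DeltaIFS (fun _ => 8⁻¹) transl n ≤ 2 * 8⁻¹ ^ n ^ 2 :=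
    (DeltaIFS_le hα hβ hαβ hr).trans ((abs_of_pos hpos).le.trans hle)
  have hlog : Real.log (DeltaIFS (fun _ => 8⁻¹) transl n) ≤
      Real.log 2 - n ^ 2 * (3 * Real.log 2) := by
    refine (Real.log_le_log hΔpos hΔle).trans_eq ?_
    rw [Real.log_mul two_ne_zero (by positivity), Real.log_pow, Real.log_inv,
      show (8 : ℝ) = 2 ^ 3 by norm_num, Real.log_pow]
    push_cast
    ring
  have hn' : (2 : ℝ) < n := by exact_mod_cast hn
  have hlog2 := Real.log_two_gt_d9
  have hsq : 4 * (3 * Real.log 2 - 1) ≤ n ^ 2 * (3 * Real.log 2 - 1) :=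
    mul_le_mul_of_nonneg_right (by nlinarith) (by linarith)
  rw [div_le_iff₀ (by linarith), neg_mul, ← sq]
  linarith [Real.log_two_lt_d9]

end LacunaryIFS

theorem stmt9 : ∃ (k : ℕ) (r c : Fin k → ℝ),
    (∀ i, 0 < |r i| ∧ |r i| < 1) ∧
    (∀ n : ℕ, ∀ α β : List (Fin k), α.length = n → β.length = n → α ≠ β →
      compIFS r c α ≠ compIFS r c β) ∧
    Filter.Tendsto (fun n : ℕ => Real.log (DeltaIFS r c n) / n)
      Filter.atTop Filter.atBot := by
  refine ⟨4, fun _ => 8⁻¹, LacunaryIFS.transl, fun _ => by norm_num [abs_of_pos], ?_, ?_⟩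
  · intro n α β hα hβ hne h
    exact hne (LacunaryIFS.compIFS_transl_injective (hα.trans hβ.symm) (congrFun h 0))
  · refine Filter.tendsto_atBot_mono' _ ?_
      (Filter.tendsto_neg_atTop_atBot.comp tendsto_natCast_atTop_atTop)
    filter_upwards [Filter.eventually_gt_atTop 2] with n hn
      using LacunaryIFS.log_DeltaIFS_div_le hn
end

section
/- Let (ζₘ) be a sequence of positive integers with ζ₁ = 1 and, for each m ≥ 2, ζₘ ≥ 8^{Lₘ₋₁} where Lₘ₋₁ is defined by 2^{Lₘ₋₁−1} − 1 ≤ qₘ₋₁ < 2^{Lₘ₋₁} − 1 and qₘ is the continued fraction denominator recurrence qₘ = ζₘ qₘ₋₁ + qₘ₋₂ (q₀ = 1, q₋₁ = 0). Then for all m ≥ 2, defining L'ₘ by 2^{L'ₘ−1} − 1 ≤ qₘ < 2^{L'ₘ} − 1, one has 2Lₘ₋₁ < L'ₘ. -/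
theorem pos_of_continuant_recurrence {ζ q : ℕ → ℕ} (hq0 : 0 < q 0) (hq1 : 0 < q 1)
    (hrec : ∀ m, 2 ≤ m → q m = ζ m * q (m - 1) + q (m - 2)) (m : ℕ) : 0 < q m := by
  induction m using Nat.twoStepInduction with
  | zero => exact hq0
  | one => exact hq1
  | more n hn _ =>
    rw [hrec (n + 2) le_add_self]
    exact hn.trans_le (Nat.le_add_left _ _)

theorem stmt14_general (ζ q L : ℕ → ℕ)
    (hζpos : ∀ m, 1 ≤ m → 0 < ζ m)
    (hq0 : q 0 = 1) (hq1 : q 1 = ζ 1)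
    (hrec : ∀ m, 2 ≤ m → q m = ζ m * q (m - 1) + q (m - 2))
    (hL : ∀ m, 1 ≤ m → 2 ^ (L m - 1) - 1 ≤ q m ∧ q m < 2 ^ (L m) - 1)
    (hζbig : ∀ m, 2 ≤ m → 8 ^ (L (m - 1)) ≤ ζ m) :
    ∀ m, 2 ≤ m → 2 * L (m - 1) < L m := by
  intro m hm
  have hqpos : 0 < q (m - 1) :=
    pos_of_continuant_recurrence (hq0 ▸ one_pos) (hq1 ▸ hζpos 1 le_rfl) hrec (m - 1)
  have hlower : 2 ^ (2 * L (m - 1)) ≤ q m :=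
    calc 2 ^ (2 * L (m - 1)) ≤ 2 ^ (3 * L (m - 1)) := Nat.pow_le_pow_right two_pos (by omega)
      _ = 8 ^ L (m - 1) := by rw [pow_mul]; norm_num
      _ ≤ ζ m := hζbig m hm
      _ ≤ ζ m * q (m - 1) := Nat.le_mul_of_pos_right _ hqpos
      _ ≤ q m := hrec m hm ▸ Nat.le_add_right _ _
  have hupper : q m < 2 ^ L m := (hL m (by omega)).2.trans_le (Nat.sub_le _ _)
  exact (Nat.pow_lt_pow_iff_right (by norm_num)).mp (hlower.trans_lt hupper)

theorem stmt14 (ζ q L : ℕ → ℕ)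
    (hζ1 : ζ 1 = 1) (hζpos : ∀ m, 1 ≤ m → 0 < ζ m)
    (hq0 : q 0 = 1) (hq1 : q 1 = ζ 1)
    (hrec : ∀ m, 2 ≤ m → q m = ζ m * q (m - 1) + q (m - 2))
    (hL : ∀ m, 1 ≤ m → 2 ^ (L m - 1) - 1 ≤ q m ∧ q m < 2 ^ (L m) - 1)
    (hζbig : ∀ m, 2 ≤ m → 8 ^ (L (m - 1)) ≤ ζ m) :
    ∀ m, 2 ≤ m → 2 * L (m - 1) < L m :=
  stmt14_general ζ q L hζpos hq0 hq1 hrec hL hζbig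
end

section
/- For every sequence (εₙ) of positive reals with εₙ ≤ 8^{−n} for all n, there exist Liouville numbers s, t ∈ (0,1) such that 1, s, t are not related by any equation t = (a/b)s + c/d with integers a,b,d ≠ 0, and for every n ≥ 1, min{(1/2ⁿ)|q·s − p| : 0 ≤ p,q ≤ 2ⁿ−1, (p,q) ≠ (0,0)} ≤ εₙ or min{(1/2ⁿ)|q·t − p| : 0 ≤ p,q ≤ 2ⁿ−1, (p,q) ≠ (0,0)} ≤ εₙ. -/
/-!
Take lacunary binary series `s = ∑_{k ≥ 1} 2^(-A k)` and `t = ∑_{k ≥ 1} 2^(-B k)` with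
interleaved exponents `A 0 < B 0 < A 1 < B 1 < ⋯`, each one huge compared with the previous.
Truncating `s` after `2^(-A k)` gives a fraction with denominator `2^(A k)` and error about
`2^(-A (k + 1))`; it serves every scale `n` between `A k` and `B k`, and the truncations of `t`
serve the scales between `B k` and `A (k + 1)`. The fast growth makes both numbers Liouville.
If `u t = v s + w` with `|u|, |v| ≤ M`, multiplying by `2^(B M)` leaves the integer
`2^(B M) (v σ - u τ)`, where `σ, τ` are the tails after index `M`; it has absolute value `< 1`,
so `v σ = u τ`, which is impossible because `τ` is far smaller than `σ`.
-/

open Filter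

namespace Lacunary

-- `f 0` is not a term; it only enters as the exponent of the denominator of the empty truncation.
noncomputable def sum (f : ℕ → ℕ) : ℝ := ∑' j, (2 : ℝ)⁻¹ ^ f (j + 1)

noncomputable def partialSum (f : ℕ → ℕ) (k : ℕ) : ℝ :=
  ∑ j ∈ Finset.range k, (2 : ℝ)⁻¹ ^ f (j + 1)

noncomputable def tail (f : ℕ → ℕ) (k : ℕ) : ℝ := ∑' j, (2 : ℝ)⁻¹ ^ f (j + k + 1)

variable {f : ℕ → ℕ}

lemma tail_term_le (hf : StrictMono f) (k j : ℕ) :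
    (2 : ℝ)⁻¹ ^ f (j + k + 1) ≤ (2 : ℝ)⁻¹ ^ f (k + 1) * (2 : ℝ)⁻¹ ^ j := by
  rw [← pow_add, add_comm (f (k + 1))]
  exact pow_le_pow_of_le_one (by norm_num) (by norm_num) (hf.add_le_nat j (k + 1))

lemma summable_tail (hf : StrictMono f) (k : ℕ) :
    Summable fun j ↦ (2 : ℝ)⁻¹ ^ f (j + k + 1) :=
  ((summable_geometric_of_lt_one (by norm_num) (by norm_num)).mul_left _).of_nonneg_of_le
    (fun _ ↦ by positivity) (tail_term_le hf k)

lemma sum_eq_partialSum_add_tail (hf : StrictMono f) (k : ℕ) :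
    sum f = partialSum f k + tail f k :=
  ((summable_tail hf 0).sum_add_tsum_nat_add k).symm

lemma one_le_two_pow_mul_tail (hf : StrictMono f) (k : ℕ) :
    1 ≤ 2 ^ f (k + 1) * tail f k := by
  have h := (summable_tail hf k).le_tsum 0 fun _ _ ↦ by positivity
  rw [zero_add, inv_pow] at h
  calc (1 : ℝ) = 2 ^ f (k + 1) * (2 ^ f (k + 1))⁻¹ := (mul_inv_cancel₀ (by positivity)).symm
    _ ≤ 2 ^ f (k + 1) * tail f k := by gcongr; exact h

lemma two_pow_mul_tail_le (hf : StrictMono f) (k : ℕ) :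
    2 ^ f (k + 1) * tail f k ≤ 2 := by
  have h : tail f k ≤ (2 : ℝ)⁻¹ ^ f (k + 1) * 2 := by
    calc tail f k ≤ ∑' j, (2 : ℝ)⁻¹ ^ f (k + 1) * (2 : ℝ)⁻¹ ^ j :=
          (summable_tail hf k).tsum_le_tsum (tail_term_le hf k)
            ((summable_geometric_of_lt_one (by norm_num) (by norm_num)).mul_left _)
      _ = (2 : ℝ)⁻¹ ^ f (k + 1) * 2 := by rw [tsum_mul_left, tsum_geometric_inv_two]
  calc 2 ^ f (k + 1) * tail f k ≤ 2 ^ f (k + 1) * ((2 : ℝ)⁻¹ ^ f (k + 1) * 2) := by gcongr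
    _ = 2 := by rw [inv_pow, ← mul_assoc, mul_inv_cancel₀ (by positivity), one_mul]

lemma tail_pos (hf : StrictMono f) (k : ℕ) : 0 < tail f k :=
  pos_of_mul_pos_right (one_pos.trans_le (one_le_two_pow_mul_tail hf k)) (by positivity)

lemma sum_mem_Ioo (hf : StrictMono f) (hf1 : 2 ≤ f 1) : sum f ∈ Set.Ioo 0 1 := by
  have h := sum_eq_partialSum_add_tail hf 0
  rw [partialSum, Finset.sum_range_zero, zero_add] at h
  have hpow : (4 : ℝ) ≤ 2 ^ f 1 := by
    calc (4 : ℝ) = 2 ^ 2 := by norm_num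
      _ ≤ 2 ^ f 1 := pow_le_pow_right₀ (by norm_num) hf1
  have hbound := two_pow_mul_tail_le hf 0
  rw [h]
  exact ⟨tail_pos hf 0, by nlinarith [tail_pos hf 0]⟩

lemma exists_two_pow_mul_partialSum_eq {k m : ℕ} (h : ∀ j < k, f (j + 1) ≤ m) :
    ∃ p : ℕ, (2 : ℝ) ^ m * partialSum f k = p := by
  refine ⟨∑ j ∈ Finset.range k, 2 ^ (m - f (j + 1)), ?_⟩
  rw [partialSum, Finset.mul_sum]
  push_cast
  refine Finset.sum_congr rfl fun j hj ↦ ?_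
  rw [inv_pow, pow_sub₀ _ two_ne_zero (h j (Finset.mem_range.mp hj))]

lemma partialSum_lt_one (hf : StrictMono f) (hf1 : 2 ≤ f 1) (k : ℕ) : partialSum f k < 1 := by
  linarith [sum_eq_partialSum_add_tail hf k, tail_pos hf k, (sum_mem_Ioo hf hf1).2]

theorem liouville_sum (hgrow : ∀ k, (k + 1) * (f k + 1) ≤ f (k + 1)) : Liouville (sum f) := by
  have hf : StrictMono f := strictMono_nat_of_lt_succ fun k ↦ by nlinarith [hgrow k]
  intro m
  obtain ⟨p, hp⟩ := exists_two_pow_mul_partialSum_eq (f := f) (k := m + 1) (m := f (m + 1))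
    fun j hj ↦ hf.monotone (by omega)
  have hq : (0 : ℝ) < 2 ^ f (m + 1) := by positivity
  refine ⟨p, 2 ^ f (m + 1), one_lt_pow₀ one_lt_two (by nlinarith [hgrow m]), ?_⟩
  have hdiff : sum f - (p : ℤ) / ((2 ^ f (m + 1) : ℤ) : ℝ) = tail f (m + 1) := by
    push_cast
    rw [← hp, mul_div_cancel_left₀ _ hq.ne', sum_eq_partialSum_add_tail hf (m + 1)]
    ring
  refine ⟨sub_ne_zero.mp (hdiff ▸ (tail_pos hf _).ne'), ?_⟩
  rw [hdiff, abs_of_pos (tail_pos hf _)]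
  -- `f (m + 2) ≥ (m + 2) (f (m + 1) + 1) > m f (m + 1) + 1`
  have hexp : ((2 : ℝ) ^ f (m + 1)) ^ m * 2 < 2 ^ f (m + 1 + 1) := by
    rw [← pow_mul, ← pow_succ]
    exact pow_lt_pow_right₀ one_lt_two (by nlinarith [hgrow (m + 1)])
  have htail := two_pow_mul_tail_le hf (m + 1)
  push_cast
  rw [lt_div_iff₀ (by positivity)]
  nlinarith [tail_pos hf (m + 1)]

theorem exists_small_linear_form (hf : StrictMono f) (hf1 : 2 ≤ f 1) {k n : ℕ} (hkn : f k < n)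
    {e : ℝ} (he : (2 : ℝ) ^ (f k + 1) ≤ 2 ^ f (k + 1) * (2 ^ n * e)) :
    ∃ p q : ℤ, 0 ≤ p ∧ p ≤ 2 ^ n - 1 ∧ 0 ≤ q ∧ q ≤ 2 ^ n - 1 ∧ ¬(p = 0 ∧ q = 0) ∧
      (1 / 2 ^ n) * |(q : ℝ) * sum f - p| ≤ e := by
  obtain ⟨p, hp⟩ := exists_two_pow_mul_partialSum_eq (f := f) (k := k) (m := f k)
    fun j hj ↦ hf.monotone (by omega)
  have hq : (2 : ℤ) ^ f k < 2 ^ n := pow_lt_pow_right₀ one_lt_two hkn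
  have hpq : (p : ℤ) < 2 ^ f k := by
    have : (p : ℝ) < 2 ^ f k := by
      rw [← hp]
      exact mul_lt_of_lt_one_right (by positivity) (partialSum_lt_one hf hf1 k)
    exact_mod_cast this
  refine ⟨p, 2 ^ f k, by positivity, by omega, by positivity, by omega,
    fun h ↦ absurd h.2 (by positivity), ?_⟩
  have hform : ((2 ^ f k : ℤ) : ℝ) * sum f - (p : ℤ) = 2 ^ f k * tail f k := by
    push_cast
    rw [← hp, sum_eq_partialSum_add_tail hf k]
    ring
  rw [hform, abs_of_pos (mul_pos (by positivity) (tail_pos hf k)), one_div_mul_eq_div,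
    div_le_iff₀' (by positivity)]
  have htail := two_pow_mul_tail_le hf k
  refine le_of_mul_le_mul_left ?_ (by positivity : (0 : ℝ) < 2 ^ f (k + 1))
  calc 2 ^ f (k + 1) * (2 ^ f k * tail f k) = 2 ^ f k * (2 ^ f (k + 1) * tail f k) := by ring
    _ ≤ 2 ^ f k * 2 := by gcongr
    _ = 2 ^ (f k + 1) := (pow_succ _ _).symm
    _ ≤ _ := he

section Interleaved

variable {A B : ℕ → ℕ}

lemma mul_tail_lt_tail (hA : StrictMono A) (hB : StrictMono B) {k : ℕ}
    (hgap : A (k + 1) + k + 2 ≤ B (k + 1)) {c : ℝ} (hc₀ : 0 ≤ c) (hc : c < 2 ^ k) :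
    c * tail B k < tail A k := by
  have hscale : (2 : ℝ) ^ A (k + 1) * 2 ^ k * 4 ≤ 2 ^ B (k + 1) := by
    rw [← pow_add, show (4 : ℝ) = 2 ^ 2 by norm_num, ← pow_add]
    exact pow_le_pow_right₀ one_le_two hgap
  refine lt_of_mul_lt_mul_left ?_ (by positivity : (0 : ℝ) ≤ 2 ^ B (k + 1))
  calc 2 ^ B (k + 1) * (c * tail B k) = c * (2 ^ B (k + 1) * tail B k) := by ring
    _ ≤ c * 2 := by gcongr; exact two_pow_mul_tail_le hB k
    _ < 2 ^ k * 4 := by linarith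
    _ ≤ 2 ^ A (k + 1) * tail A k * (2 ^ k * 4) :=
      le_mul_of_one_le_left (by positivity) (one_le_two_pow_mul_tail hA k)
    _ = 2 ^ A (k + 1) * 2 ^ k * 4 * tail A k := by ring
    _ ≤ 2 ^ B (k + 1) * tail A k := by gcongr; exact (tail_pos hA k).le

lemma two_pow_mul_tail_add_tail_lt_one (hA : StrictMono A) (hB : StrictMono B) {k : ℕ}
    (hgap : B k + k + 2 ≤ A (k + 1)) (hAB : A (k + 1) ≤ B (k + 1)) {c : ℝ} (hc₀ : 0 ≤ c)
    (hc : c < 2 ^ k) :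
    2 ^ B k * (c * tail A k + c * tail B k) < 1 := by
  have hscale : (2 : ℝ) ^ B k * 2 ^ k * 4 ≤ 2 ^ A (k + 1) := by
    rw [← pow_add, show (4 : ℝ) = 2 ^ 2 by norm_num, ← pow_add]
    exact pow_le_pow_right₀ one_le_two hgap
  have hτ : 2 ^ A (k + 1) * tail B k ≤ 2 :=
    (mul_le_mul_of_nonneg_right (pow_le_pow_right₀ one_le_two hAB) (tail_pos hB k).le).trans
      (two_pow_mul_tail_le hB k)
  refine lt_of_mul_lt_mul_left ?_ (by positivity : (0 : ℝ) ≤ 2 ^ A (k + 1))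
  calc 2 ^ A (k + 1) * (2 ^ B k * (c * tail A k + c * tail B k))
      = 2 ^ B k * c * (2 ^ A (k + 1) * tail A k + 2 ^ A (k + 1) * tail B k) := by ring
    _ ≤ 2 ^ B k * c * 4 := by gcongr; linarith [two_pow_mul_tail_le hA k]
    _ < 2 ^ B k * 2 ^ k * 4 := by gcongr
    _ ≤ 2 ^ A (k + 1) * 1 := by rw [mul_one]; exact hscale

lemma exists_int_eq_two_pow_mul_tail_sub (hA : StrictMono A) (hB : StrictMono B) {k : ℕ}
    (hAB : A k ≤ B k) {u v w : ℤ} (h : (u : ℝ) * sum B = v * sum A + w) :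
    ∃ z : ℤ, (2 : ℝ) ^ B k * (v * tail A k - u * tail B k) = z := by
  obtain ⟨pA, hpA⟩ := exists_two_pow_mul_partialSum_eq (f := A) (k := k) (m := B k)
    fun j hj ↦ (hA.monotone (by omega : j + 1 ≤ k)).trans hAB
  obtain ⟨pB, hpB⟩ := exists_two_pow_mul_partialSum_eq (f := B) (k := k) (m := B k)
    fun j hj ↦ hB.monotone (by omega)
  refine ⟨u * pB - v * pA - w * 2 ^ B k, ?_⟩
  rw [sum_eq_partialSum_add_tail hA k, sum_eq_partialSum_add_tail hB k] at h
  push_cast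
  rw [← hpA, ← hpB]
  linear_combination -(2 : ℝ) ^ B k * h

theorem int_mul_sum_ne (hAB : ∀ k, A k + k + 2 ≤ B k) (hBA : ∀ k, B k + k + 2 ≤ A (k + 1))
    {u v : ℤ} (hv : v ≠ 0) (w : ℤ) :
    (u : ℝ) * sum B ≠ v * sum A + w := by
  intro h
  have hA : StrictMono A := strictMono_nat_of_lt_succ fun k ↦ by linarith [hAB k, hBA k]
  have hB : StrictMono B :=
    strictMono_nat_of_lt_succ fun k ↦ by linarith [hAB (k + 1), hBA k]
  set M := max u.natAbs v.natAbs
  obtain ⟨z, hz⟩ := exists_int_eq_two_pow_mul_tail_sub hA hB (k := M) (by linarith [hAB M]) h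
  set σ := tail A M
  set τ := tail B M
  have hσ : 0 < σ := tail_pos hA M
  have hτ : 0 < τ := tail_pos hB M
  have hM : (M : ℝ) < 2 ^ M := by exact_mod_cast Nat.lt_two_pow_self
  have hu_le : |(u : ℝ)| ≤ M := by
    rw [← Int.cast_abs, Int.abs_eq_natAbs]; exact_mod_cast le_max_left _ _
  have hv_le : |(v : ℝ)| ≤ M := by
    rw [← Int.cast_abs, Int.abs_eq_natAbs]; exact_mod_cast le_max_right _ _
  have hsmall : |(2 : ℝ) ^ B M * (v * σ - u * τ)| < 1 := by
    refine lt_of_le_of_lt ?_ (two_pow_mul_tail_add_tail_lt_one hA hB (hBA M)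
      (by linarith [hAB (M + 1)]) M.cast_nonneg hM)
    rw [abs_mul, abs_of_pos (by positivity)]
    gcongr
    refine (abs_sub _ _).trans ?_
    rw [abs_mul, abs_mul, abs_of_pos hσ, abs_of_pos hτ]
    gcongr
  have hrel : (v : ℝ) * σ = u * τ := by
    rw [hz, ← Int.cast_abs, ← Int.cast_one, Int.cast_lt, Int.abs_lt_one_iff] at hsmall
    rw [hsmall, Int.cast_zero] at hz
    linarith [(mul_eq_zero.mp hz).resolve_left (by positivity)]
  have hv1 : 1 ≤ |(v : ℝ)| := by exact_mod_cast Int.one_le_abs hv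
  refine lt_irrefl (|(v : ℝ)| * σ) ?_
  calc |(v : ℝ)| * σ = |(u : ℝ)| * τ := by
        rw [← abs_of_pos hσ, ← abs_of_pos hτ, ← abs_mul, ← abs_mul, hrel]
    _ ≤ M * τ := by gcongr
    _ < σ := mul_tail_lt_tail hA hB (by linarith [hAB (M + 1)]) M.cast_nonneg hM
    _ ≤ |(v : ℝ)| * σ := le_mul_of_one_le_left hσ.le hv1

end Interleaved

end Lacunary

def twoStepRec (a b : ℕ) (next : ℕ → ℕ → ℕ → ℕ) : ℕ → ℕ
  | 0 => a
  | 1 => b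
  | i + 2 => next i (twoStepRec a b next i) (twoStepRec a b next (i + 1))

-- `g (2 * k)` and `g (2 * k + 1)` are the exponents of `s` and `t`; by `approx`, truncating at
-- `g i` serves every scale `n ∈ (g i, g (i + 1)]`.
structure InterleavedScales (ε : ℕ → ℝ) (g : ℕ → ℕ) : Prop where
  zero : g 0 = 0
  gap : ∀ i, g i + i + 2 ≤ g (i + 1)
  growth : ∀ i, (i + 1) * (g i + 1) ≤ g (i + 2)
  approx : ∀ i n, 1 ≤ n → n ≤ g (i + 1) → (2 : ℝ) ^ (g i + 1) ≤ 2 ^ g (i + 2) * (2 ^ n * ε n)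

lemma eventually_two_pow_le {ε : ℕ → ℝ} (hpos : ∀ n, 1 ≤ n → 0 < ε n) (c U : ℕ) :
    ∀ᶠ N in atTop, ∀ n, 1 ≤ n → n ≤ U → (2 : ℝ) ^ c ≤ 2 ^ N * (2 ^ n * ε n) := by
  have h := (Set.finite_Icc 1 U).eventually_all.mpr fun n hn ↦
    ((tendsto_pow_atTop_atTop_of_one_lt one_lt_two).atTop_mul_const
      (r := 2 ^ n * ε n) (by have := hpos n hn.1; positivity)).eventually_ge_atTop ((2 : ℝ) ^ c)
  exact h.mono fun N hN n h1 hU ↦ hN n ⟨h1, hU⟩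

lemma InterleavedScales.strictMono {ε : ℕ → ℝ} {g : ℕ → ℕ} (hg : InterleavedScales ε g) :
    StrictMono g :=
  strictMono_nat_of_lt_succ fun i ↦ by linarith [hg.gap i]

theorem exists_interleavedScales {ε : ℕ → ℝ} (hpos : ∀ n, 1 ≤ n → 0 < ε n) :
    ∃ g, InterleavedScales ε g := by
  choose next hnext using fun i a b : ℕ ↦
    ((eventually_two_pow_le hpos (a + 1) b).and
      ((eventually_ge_atTop (b + i + 3)).and (eventually_ge_atTop ((i + 1) * (a + 1))))).exists
  refine ⟨twoStepRec 0 2 next, rfl, fun i ↦ ?_, fun i ↦ (hnext i _ _).2.2,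
    fun i ↦ (hnext i _ _).1⟩
  cases i with
  | zero => exact le_refl 2
  | succ i => exact (hnext i _ _).2.1

theorem stmt18_general (ε : ℕ → ℝ) (hpos : ∀ n, 1 ≤ n → 0 < ε n) :
    ∃ s t : ℝ, s ∈ Set.Ioo (0:ℝ) 1 ∧ t ∈ Set.Ioo (0:ℝ) 1 ∧
      Liouville s ∧ Liouville t ∧
      (¬ ∃ a b c d : ℤ, a ≠ 0 ∧ b ≠ 0 ∧ d ≠ 0 ∧ t = ((a : ℝ) / b) * s + (c : ℝ) / d) ∧
      ∀ n : ℕ, 1 ≤ n →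
        (∃ p q : ℤ, 0 ≤ p ∧ p ≤ 2 ^ n - 1 ∧ 0 ≤ q ∧ q ≤ 2 ^ n - 1 ∧ ¬(p = 0 ∧ q = 0) ∧
          (1 / 2 ^ n) * |(q : ℝ) * s - p| ≤ ε n) ∨
        (∃ p q : ℤ, 0 ≤ p ∧ p ≤ 2 ^ n - 1 ∧ 0 ≤ q ∧ q ≤ 2 ^ n - 1 ∧ ¬(p = 0 ∧ q = 0) ∧
          (1 / 2 ^ n) * |(q : ℝ) * t - p| ≤ ε n) := by
  obtain ⟨g, hg⟩ := exists_interleavedScales hpos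
  have hmono := hg.strictMono
  have hA : StrictMono fun k ↦ g (2 * k) := hmono.comp (strictMono_mul_left_of_pos two_pos)
  have hB : StrictMono fun k ↦ g (2 * k + 1) :=
    hmono.comp ((strictMono_mul_left_of_pos two_pos).add_const 1)
  have hA1 : 2 ≤ g 2 := by linarith [hg.gap 1]
  have hB1 : 2 ≤ g 3 := by linarith [hg.gap 2]
  refine ⟨Lacunary.sum fun k ↦ g (2 * k), Lacunary.sum fun k ↦ g (2 * k + 1),
    Lacunary.sum_mem_Ioo hA hA1, Lacunary.sum_mem_Ioo hB hB1,
    Lacunary.liouville_sum fun k ↦ (hg.growth (2 * k)).trans' (Nat.mul_le_mul_right _ (by omega)),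
    Lacunary.liouville_sum fun k ↦
      (hg.growth (2 * k + 1)).trans' (Nat.mul_le_mul_right _ (by omega)),
    ?_, fun n hn ↦ ?_⟩
  · rintro ⟨a, b, c, d, ha, hb, hd, h⟩
    refine Lacunary.int_mul_sum_ne (A := fun k ↦ g (2 * k)) (B := fun k ↦ g (2 * k + 1))
      (fun k ↦ (hg.gap (2 * k)).trans' (by omega))
      (fun k ↦ (hg.gap (2 * k + 1)).trans' (by omega))
      (mul_ne_zero ha hd) (c * b) (u := b * d) ?_
    rw [h]
    push_cast
    field_simp
  obtain ⟨i, hi, hin⟩ := hmono.exists_between_of_tendsto_atTop hmono.tendsto_atTop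
    (by rw [hg.zero]; exact hn)
  rcases Nat.even_or_odd' i with ⟨k, rfl | rfl⟩
  · exact .inl <| Lacunary.exists_small_linear_form hA hA1 hi (hg.approx (2 * k) n hn hin)
  · exact .inr <| Lacunary.exists_small_linear_form hB hB1 hi (hg.approx (2 * k + 1) n hn hin)

theorem stmt18 (ε : ℕ → ℝ) (hpos : ∀ n, 1 ≤ n → 0 < ε n)
    (hsmall : ∀ n, 1 ≤ n → ε n ≤ 1 / 8 ^ n) :
    ∃ s t : ℝ, s ∈ Set.Ioo (0:ℝ) 1 ∧ t ∈ Set.Ioo (0:ℝ) 1 ∧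
      Liouville s ∧ Liouville t ∧
      (¬ ∃ a b c d : ℤ, a ≠ 0 ∧ b ≠ 0 ∧ d ≠ 0 ∧ t = ((a : ℝ) / b) * s + (c : ℝ) / d) ∧
      ∀ n : ℕ, 1 ≤ n →
        (∃ p q : ℤ, 0 ≤ p ∧ p ≤ 2 ^ n - 1 ∧ 0 ≤ q ∧ q ≤ 2 ^ n - 1 ∧ ¬(p = 0 ∧ q = 0) ∧
          (1 / 2 ^ n) * |(q : ℝ) * s - p| ≤ ε n) ∨
        (∃ p q : ℤ, 0 ≤ p ∧ p ≤ 2 ^ n - 1 ∧ 0 ≤ q ∧ q ≤ 2 ^ n - 1 ∧ ¬(p = 0 ∧ q = 0) ∧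
          (1 / 2 ^ n) * |(q : ℝ) * t - p| ≤ ε n) :=
  stmt18_general ε hpos
end
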